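/- arXiv:2601.05559 — 2 statements merged into one kernel-verified Lean document; each statement's English description precedes it below -/
import Mathlib

section
/- Suppose φ : H × ℂ → ℂ satisfies the Jacobi-form transformation law φ((aτ+b)/(cτ+d), z/(cτ+d)) = (cτ+d)^k exp(2πi m c z²/(cτ+d)) φ(τ,z) for all (a b; c d) ∈ SL₂(ℤ), and define Φ(τ,z) = exp(-8π² m G₂(τ) z²) φ(τ,z) = ∑_{n≥0} aₙ(τ) zⁿ (assuming φ is holomorphic in z near z = 0 for each τ). Then each coefficient function aₙ(τ) transforms as a modular form of weight k+n over SL₂(ℤ): aₙ((aτ+b)/(cτ+d)) = (cτ+d)^{k+n} aₙ(τ). -/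
open Complex

private lemma ofScalars_coeff' (c : ℕ → ℂ) (n : ℕ) :
    (FormalMultilinearSeries.ofScalars ℂ c).coeff n = c n := by
  simp [FormalMultilinearSeries.coeff, FormalMultilinearSeries.ofScalars,
    ContinuousMultilinearMap.smul_apply, List.prod_ofFn]

/-- If φ(τ,z) satisfies the Jacobi-form transformation law of weight k and index m over
SL₂(ℤ), and Φ(τ,z) = exp(-8π² m G₂(τ) z²) φ(τ,z) = ∑_{n≥0} fₙ(τ) zⁿ near z = 0, where G₂
is the weight-2 quasimodular Eisenstein series, then each fₙ transforms as a modular form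
of weight k + n over SL₂(ℤ). -/
theorem jacobi_coeffs_modular (m : ℝ) (k : ℤ) (φ : ℂ → ℂ → ℂ) (G2 : ℂ → ℂ) (f : ℕ → ℂ → ℂ)
    (hG2 : ∀ a b c d : ℤ, a * d - b * c = 1 → ∀ τ : ℂ, 0 < τ.im →
      G2 (((a : ℂ) * τ + b) / ((c : ℂ) * τ + d)) =
        ((c : ℂ) * τ + d) ^ 2 * G2 τ - (c : ℂ) * ((c : ℂ) * τ + d) / (4 * (Real.pi : ℂ) * I))
    (hφ : ∀ a b c d : ℤ, a * d - b * c = 1 → ∀ τ z : ℂ, 0 < τ.im →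
      φ (((a : ℂ) * τ + b) / ((c : ℂ) * τ + d)) (z / ((c : ℂ) * τ + d)) =
        ((c : ℂ) * τ + d) ^ k *
          Complex.exp (2 * (Real.pi : ℂ) * I * (m : ℂ) * (c : ℂ) * z ^ 2 / ((c : ℂ) * τ + d)) *
            φ τ z)
    (hexp : ∀ τ : ℂ, 0 < τ.im → ∃ ε > (0 : ℝ), ∀ z : ℂ, ‖z‖ < ε →
      HasSum (fun n : ℕ => f n τ * z ^ n)
        (Complex.exp (-8 * (Real.pi : ℂ) ^ 2 * (m : ℂ) * G2 τ * z ^ 2) * φ τ z)) :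
    ∀ a b c d : ℤ, a * d - b * c = 1 → ∀ n : ℕ, ∀ τ : ℂ, 0 < τ.im →
      f n (((a : ℂ) * τ + b) / ((c : ℂ) * τ + d)) = ((c : ℂ) * τ + d) ^ (k + n) * f n τ := by
  intro a b c d hdet n τ hτ
  have hdetR : (a : ℝ) * d - b * c = 1 := by exact_mod_cast hdet
  set j : ℂ := (c : ℂ) * τ + d with hjdef
  have hj : j ≠ 0 := by
    intro h
    have him : (c : ℝ) * τ.im = 0 := by
      have := congrArg Complex.im h
      simpa [hjdef] using this
    have hc : (c : ℝ) = 0 := by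
      rcases mul_eq_zero.1 him with h1 | h1
      · exact h1
      · exact absurd h1 (ne_of_gt hτ)
    have hc0 : c = 0 := by exact_mod_cast hc
    have hd : (d : ℂ) = 0 := by simpa [hjdef, hc0] using h
    have hd0 : d = 0 := by exact_mod_cast hd
    rw [hc0, hd0] at hdet; simp at hdet
  set τ' : ℂ := ((a : ℂ) * τ + b) / j with hτ'def
  have hnormSq : 0 < Complex.normSq j := normSq_pos.2 hj
  have hτ'im : 0 < τ'.im := by
    have him : τ'.im = τ.im / Complex.normSq j := by
      rw [hτ'def, Complex.div_im]
      simp only [hjdef, Complex.add_im, Complex.add_re, Complex.mul_im, Complex.mul_re,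
        Complex.intCast_im, Complex.intCast_re, zero_mul, mul_zero, sub_zero, add_zero,
        zero_add]
      field_simp
      ring_nf
      linear_combination (normSq (↑c * τ + ↑d))⁻¹ * hdetR
    rw [him]
    exact div_pos hτ hnormSq
  obtain ⟨ε₁, hε₁, hS₁⟩ := hexp τ hτ
  obtain ⟨ε₂, hε₂, hS₂⟩ := hexp τ' hτ'im
  have hπ : (Real.pi : ℂ) ≠ 0 := by exact_mod_cast Real.pi_ne_zero
  -- the main transformation identity for Φ
  have key : ∀ z : ℂ,
      Complex.exp (-8 * (Real.pi : ℂ) ^ 2 * (m : ℂ) * G2 τ' * (z / j) ^ 2) * φ τ' (z / j) =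
        j ^ k * (Complex.exp (-8 * (Real.pi : ℂ) ^ 2 * (m : ℂ) * G2 τ * z ^ 2) * φ τ z) := by
    intro z
    have hφ' := hφ a b c d hdet τ z hτ
    have hG2' := hG2 a b c d hdet τ hτ
    rw [← hjdef, ← hτ'def] at hφ' hG2'
    rw [hφ', hG2']
    have hexp_eq :
        Complex.exp (-8 * (Real.pi : ℂ) ^ 2 * (m : ℂ) *
            (j ^ 2 * G2 τ - (c : ℂ) * j / (4 * (Real.pi : ℂ) * I)) * (z / j) ^ 2) *
          Complex.exp (2 * (Real.pi : ℂ) * I * (m : ℂ) * (c : ℂ) * z ^ 2 / j) =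
        Complex.exp (-8 * (Real.pi : ℂ) ^ 2 * (m : ℂ) * G2 τ * z ^ 2) := by
      rw [← Complex.exp_add]
      congr 1
      have hIrw : (c : ℂ) * j / (4 * (Real.pi : ℂ) * I) =
          -(I * ((c : ℂ) * j)) / (4 * (Real.pi : ℂ)) := by
        rw [div_eq_div_iff (by simp [hπ, Complex.I_ne_zero]) (by simp [hπ])]
        linear_combination ((c : ℂ) * j * 4 * (Real.pi : ℂ)) * Complex.I_sq
      rw [hIrw]
      field_simp [hj, hπ]
      ring
    calc Complex.exp (-8 * (Real.pi : ℂ) ^ 2 * (m : ℂ) *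
            (j ^ 2 * G2 τ - (c : ℂ) * j / (4 * (Real.pi : ℂ) * I)) * (z / j) ^ 2) *
          (j ^ k * Complex.exp (2 * (Real.pi : ℂ) * I * (m : ℂ) * (c : ℂ) * z ^ 2 / j) * φ τ z)
        = j ^ k * ((Complex.exp (-8 * (Real.pi : ℂ) ^ 2 * (m : ℂ) *
            (j ^ 2 * G2 τ - (c : ℂ) * j / (4 * (Real.pi : ℂ) * I)) * (z / j) ^ 2) *
          Complex.exp (2 * (Real.pi : ℂ) * I * (m : ℂ) * (c : ℂ) * z ^ 2 / j)) * φ τ z) := by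
          ring
      _ = _ := by rw [hexp_eq]
  -- the common function
  set F : ℂ → ℂ := fun z =>
    j ^ k * (Complex.exp (-8 * (Real.pi : ℂ) ^ 2 * (m : ℂ) * G2 τ * z ^ 2) * φ τ z) with hF
  have H1 : HasFPowerSeriesAt F (FormalMultilinearSeries.ofScalars ℂ fun n => j ^ k * f n τ)
      0 := by
    rw [hasFPowerSeriesAt_iff]
    rw [Metric.eventually_nhds_iff]
    refine ⟨ε₁, hε₁, fun {z} hz => ?_⟩
    rw [dist_zero_right] at hz
    have := (hS₁ z hz).mul_left (j ^ k)
    simp only [ofScalars_coeff', smul_eq_mul, zero_add, hF]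
    convert this using 2 with n
    · rfl
    ring
  have H2 : HasFPowerSeriesAt F
      (FormalMultilinearSeries.ofScalars ℂ fun n => f n τ' * (j⁻¹) ^ n) 0 := by
    rw [hasFPowerSeriesAt_iff]
    rw [Metric.eventually_nhds_iff]
    refine ⟨ε₂ * ‖j‖, mul_pos hε₂ (norm_pos_iff.2 hj), fun {z} hz => ?_⟩
    rw [dist_zero_right] at hz
    have hzj : ‖z / j‖ < ε₂ := by
      rw [norm_div, div_lt_iff₀ (by simpa using hj)]
      exact hz
    have := hS₂ (z / j) hzj
    rw [key z] at this
    simp only [ofScalars_coeff', smul_eq_mul, zero_add, hF]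
    convert this using 2 with n
    · rfl
    rw [div_pow, div_eq_mul_inv, ← inv_pow]
    ring
  have hpq := H2.eq_formalMultilinearSeries H1
  have hco := congrArg (fun p => FormalMultilinearSeries.coeff p n) hpq
  simp only [ofScalars_coeff'] at hco
  -- hco : f n τ' * (j⁻¹)^n = j^k * f n τ
  have : f n τ' = j ^ k * f n τ * j ^ n := by
    rw [inv_pow, ← div_eq_mul_inv, div_eq_iff (pow_ne_zero n hj)] at hco
    linear_combination hco
  rw [this, zpow_add₀ hj, zpow_natCast]
  ring
end

section
/- The Jacobi identity for theta functions holds: θ'(0,τ) = π θ₁(0,τ) θ₂(0,τ) θ₃(0,τ), where θ'(0,τ) = ∂θ(v,τ)/∂v at v = 0. -/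
open Complex

section JacobiAux

open Filter


lemma one_sub_ne' {a : ℂ} (h : ‖a‖ < 1) : 1 - a ≠ 0 := by
  intro e
  rw [sub_eq_zero] at e
  rw [← e] at h
  simp at h

lemma summable_log_one_sub' {a : ℕ → ℂ} (hs : Summable fun n => ‖a n‖) :
    Summable fun n => Complex.log (1 - a n) := by
  apply Summable.of_norm_bounded_eventually_nat (g := fun n => 3/2 * ‖a n‖) (hs.mul_left _)
  have h0 : Tendsto (fun n => ‖a n‖) atTop (nhds 0) := hs.tendsto_atTop_zero
  filter_upwards [h0.eventually (eventually_le_nhds (by norm_num : (0:ℝ) < 1/2))] with n hn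
  have := Complex.norm_log_one_add_half_le_self (z := -a n) (by simpa using hn)
  simpa [sub_eq_add_neg] using this

lemma multipliable_one_sub' {a : ℕ → ℂ} (h : ∀ n, ‖a n‖ < 1)
    (hs : Summable fun n => ‖a n‖) : Multipliable fun n => 1 - a n :=
  Complex.multipliable_of_summable_log (f := fun n => 1 - a n) (summable_log_one_sub' hs)

lemma tprod_one_sub_eq_cexp' {a : ℕ → ℂ} (h : ∀ n, ‖a n‖ < 1)
    (hs : Summable fun n => ‖a n‖) :
    (∏' n, (1 - a n)) = Complex.exp (∑' n, Complex.log (1 - a n)) :=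
  (Complex.cexp_tsum_eq_tprod (f := fun n => 1 - a n)
    (fun n => one_sub_ne' (h n)) (summable_log_one_sub' hs)).symm

lemma tprod_one_sub_ne_zero' {a : ℕ → ℂ} (h : ∀ n, ‖a n‖ < 1)
    (hs : Summable fun n => ‖a n‖) : (∏' n, (1 - a n)) ≠ 0 := by
  rw [tprod_one_sub_eq_cexp' h hs]; exact Complex.exp_ne_zero _

lemma summable_norm_pow_mul' {c w : ℂ} (hw : ‖w‖ < 1) {g : ℕ → ℕ} (k m : ℕ) (hk : 0 < k)
    (hg : ∀ n, g n = k * n + m) : Summable fun n : ℕ => ‖c * w ^ (g n)‖ := by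
  simp only [norm_mul, norm_pow]
  have h1 : ∀ n : ℕ, ‖c‖ * ‖w‖ ^ (g n) = (‖c‖ * ‖w‖ ^ m) * (‖w‖ ^ k) ^ n := by
    intro n
    rw [hg n, pow_add, ← pow_mul]
    ring
  exact Summable.congr (((summable_geometric_of_lt_one (pow_nonneg (norm_nonneg w) k)
    (pow_lt_one₀ (norm_nonneg w) hw hk.ne')).mul_left (‖c‖ * ‖w‖ ^ m))) (fun n => (h1 n).symm)

lemma summable_norm_pow' {w : ℂ} (hw : ‖w‖ < 1) {g : ℕ → ℕ} (k m : ℕ) (hk : 0 < k)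
    (hg : ∀ n, g n = k * n + m) : Summable fun n : ℕ => ‖w ^ (g n)‖ := by
  have := summable_norm_pow_mul' (c := 1) hw k m hk hg
  simpa using this

lemma norm_pow_lt_one' {w : ℂ} (hw : ‖w‖ < 1) {e : ℕ} (he : e ≠ 0) : ‖w ^ e‖ < 1 := by
  rw [norm_pow]
  exact pow_lt_one₀ (norm_nonneg w) hw he

lemma tprod_triple' {f g k : ℕ → ℂ} (hf : Multipliable f) (hg : Multipliable g)
    (hk : Multipliable k) :
    ∏' n, (f n * g n * k n) = (∏' n, f n) * (∏' n, g n) * (∏' n, k n) := by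
  rw [Multipliable.tprod_mul (hf.mul hg) hk, Multipliable.tprod_mul hf hg]

lemma euler_fin' {x : ℂ} (N : ℕ) :
    (∏ i ∈ Finset.range N, (1 - x ^ (i+1))) *
      ∏ i ∈ Finset.range N, ((1 + x ^ (i+1)) * (1 - x ^ (2*i+1)))
      = ∏ i ∈ Finset.range (2*N), (1 - x ^ (i+1)) := by
  induction N with
  | zero => simp
  | succ N ih =>
    have h2 : 2 * (N+1) = (2*N) + 1 + 1 := by ring
    rw [Finset.prod_range_succ, Finset.prod_range_succ, h2, Finset.prod_range_succ,
      Finset.prod_range_succ, ← ih]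
    have key : (1 - x ^ (N+1)) * ((1 + x ^ (N+1)) * (1 - x ^ (2*N+1)))
        = (1 - x ^ (2*N+1)) * (1 - x ^ (2*N+1+1)) := by
      have : x ^ (2*N+1+1) = x ^ (N+1) * x ^ (N+1) := by
        rw [← pow_add]; ring_nf
      rw [this]; ring
    calc (∏ i ∈ Finset.range N, (1 - x ^ (i+1))) * (1 - x ^ (N+1)) *
          ((∏ i ∈ Finset.range N, ((1 + x ^ (i+1)) * (1 - x ^ (2*i+1)))) *
            ((1 + x ^ (N+1)) * (1 - x ^ (2*N+1))))
        = ((∏ i ∈ Finset.range N, (1 - x ^ (i+1))) *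
            ∏ i ∈ Finset.range N, ((1 + x ^ (i+1)) * (1 - x ^ (2*i+1)))) *
            ((1 - x ^ (N+1)) * ((1 + x ^ (N+1)) * (1 - x ^ (2*N+1)))) := by ring
      _ = _ := by rw [key]; ring

lemma euler_prod' {x : ℂ} (hx : ‖x‖ < 1) :
    (∏' j : ℕ, (1 + x ^ (j+1))) * (∏' j : ℕ, (1 - x ^ (2*j+1))) = 1 := by
  have hlt1 : ∀ n : ℕ, ‖x ^ (n+1)‖ < 1 := fun n => norm_pow_lt_one' hx (Nat.succ_ne_zero n)
  have hlt2 : ∀ n : ℕ, ‖x ^ (2*n+1)‖ < 1 := fun n => norm_pow_lt_one' hx (by omega)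
  have hs1 : Summable fun n : ℕ => ‖x ^ (n+1)‖ :=
    summable_norm_pow' hx 1 1 one_pos (fun n => by ring)
  have hs2 : Summable fun n : ℕ => ‖x ^ (2*n+1)‖ :=
    summable_norm_pow' hx 2 1 two_pos (fun n => rfl)
  have mQ : Multipliable fun j : ℕ => 1 - x ^ (j+1) := multipliable_one_sub' hlt1 hs1
  have mC : Multipliable fun j : ℕ => 1 - x ^ (2*j+1) := multipliable_one_sub' hlt2 hs2
  have mB : Multipliable fun j : ℕ => 1 + x ^ (j+1) := by
    have := multipliable_one_sub' (a := fun n => -(x ^ (n+1))) (by simpa using hlt1)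
      (by simpa using hs1)
    simpa [sub_neg_eq_add] using this
  have hQ : Tendsto (fun N => ∏ i ∈ Finset.range N, (1 - x ^ (i+1))) atTop
      (nhds (∏' j : ℕ, (1 - x ^ (j+1)))) := mQ.hasProd.tendsto_prod_nat
  have hQ2 : Tendsto (fun N => ∏ i ∈ Finset.range (2*N), (1 - x ^ (i+1))) atTop
      (nhds (∏' j : ℕ, (1 - x ^ (j+1)))) := by
    have h2 : Tendsto (fun N : ℕ => 2 * N) atTop atTop :=
      tendsto_atTop_mono (f := id) (g := fun N : ℕ => 2 * N) (fun n => by simpa using (by omega : n ≤ 2*n)) tendsto_id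
    exact hQ.comp h2
  have hP : Tendsto (fun N => ∏ i ∈ Finset.range N, ((1 + x ^ (i+1)) * (1 - x ^ (2*i+1))))
      atTop (nhds ((∏' j : ℕ, (1 + x ^ (j+1))) * (∏' j : ℕ, (1 - x ^ (2*j+1))))) := by
    simp only [Finset.prod_mul_distrib]
    exact (mB.hasProd.tendsto_prod_nat).mul (mC.hasProd.tendsto_prod_nat)
  have hQP : Tendsto (fun N => (∏ i ∈ Finset.range N, (1 - x ^ (i+1))) *
      ∏ i ∈ Finset.range N, ((1 + x ^ (i+1)) * (1 - x ^ (2*i+1)))) atTop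
      (nhds ((∏' j : ℕ, (1 - x ^ (j+1))) *
        ((∏' j : ℕ, (1 + x ^ (j+1))) * (∏' j : ℕ, (1 - x ^ (2*j+1)))))) := hQ.mul hP
  have heq : (∏' j : ℕ, (1 - x ^ (j+1))) *
      ((∏' j : ℕ, (1 + x ^ (j+1))) * (∏' j : ℕ, (1 - x ^ (2*j+1))))
      = ∏' j : ℕ, (1 - x ^ (j+1)) := by
    apply tendsto_nhds_unique _ hQ2
    exact (tendsto_congr (fun N => euler_fin' N)).mp hQP
  have hA0 : (∏' j : ℕ, (1 - x ^ (j+1))) ≠ 0 := tprod_one_sub_ne_zero' hlt1 hs1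
  have := mul_left_cancel₀ hA0 (heq.trans (mul_one _).symm)
  exact this

lemma contOn_S' {x : ℂ} {δ : ℝ} (hδ : 0 < δ) (hρ : Real.exp (2*Real.pi*δ) * ‖x‖ < 1)
    (e : ℂ → ℂ) (he : Continuous e)
    (hbd : ∀ v ∈ Metric.ball (0:ℂ) δ, ‖e v‖ ≤ Real.exp (2*Real.pi*δ)) :
    ContinuousOn (fun v => ∑' j : ℕ, Complex.log (1 - e v * x ^ (j+1)))
      (Metric.ball (0:ℂ) δ) := by
  set ρ : ℝ := Real.exp (2*Real.pi*δ) * ‖x‖ with hρdef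
  have hE1 : 1 ≤ Real.exp (2*Real.pi*δ) :=
    Real.one_le_exp (by positivity)
  have hρ0 : 0 ≤ ρ := mul_nonneg (Real.exp_nonneg _) (norm_nonneg _)
  have hbound : ∀ v ∈ Metric.ball (0:ℂ) δ, ∀ j : ℕ, ‖e v * x ^ (j+1)‖ ≤ ρ ^ (j+1) := by
    intro v hv j
    rw [norm_mul, norm_pow, hρdef, mul_pow]
    have h1 : ‖e v‖ ≤ Real.exp (2*Real.pi*δ) ^ (j+1) :=
      le_trans (hbd v hv) (le_self_pow₀ hE1 (Nat.succ_ne_zero j))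
    exact mul_le_mul h1 le_rfl (by positivity) (by positivity)
  have hρpow : ∀ j : ℕ, ρ ^ (j+1) ≤ ρ :=
    fun j => pow_le_of_le_one hρ0 hρ.le (Nat.succ_ne_zero j)
  set C : ℝ := ρ * (1-ρ)⁻¹ / 2 + 1 with hC
  have hu : Summable fun j : ℕ => C * ρ ^ (j+1) := by
    apply Summable.mul_left
    have := (summable_geometric_of_lt_one hρ0 hρ).mul_left ρ
    exact this.congr (fun n => by rw [pow_succ, mul_comm])
  have key : ∀ (j : ℕ), ∀ v ∈ Metric.ball (0:ℂ) δ,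
      ‖Complex.log (1 - e v * x ^ (j+1))‖ ≤ C * ρ ^ (j+1) := by
    intro j v hv
    have hb := hbound v hv j
    have hblt : ‖e v * x ^ (j+1)‖ < 1 := lt_of_le_of_lt (hb.trans (hρpow j)) hρ
    have := Complex.norm_log_one_add_le (z := -(e v * x ^ (j+1))) (by simpa using hblt)
    rw [show (1 : ℂ) + -(e v * x ^ (j+1)) = 1 - e v * x ^ (j+1) by ring] at this
    refine this.trans ?_
    simp only [norm_neg]
    have h1 : ‖e v * x ^ (j+1)‖ ≤ ρ := hb.trans (hρpow j)
    have h2 : (1 - ‖e v * x ^ (j+1)‖)⁻¹ ≤ (1-ρ)⁻¹ := by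
      apply inv_anti₀ (by linarith) (by linarith)
    have hsq : ‖e v * x ^ (j+1)‖^2 ≤ ρ^(j+1)*ρ := by
      rw [sq]
      exact mul_le_mul hb h1 (norm_nonneg _) (by positivity)
    have hinvnn : (0:ℝ) ≤ (1 - ‖e v * x ^ (j+1)‖)⁻¹ := inv_nonneg.mpr (by linarith)
    have h3 : ‖e v * x ^ (j+1)‖^2 * (1 - ‖e v * x ^ (j+1)‖)⁻¹ ≤ (ρ^(j+1)*ρ) * (1-ρ)⁻¹ :=
      mul_le_mul hsq h2 hinvnn (by positivity)
    have h4 : (ρ^(j+1)*ρ) * (1-ρ)⁻¹ = (ρ * (1-ρ)⁻¹) * ρ^(j+1) := by ring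
    calc ‖e v * x ^ (j+1)‖^2 * (1 - ‖e v * x ^ (j+1)‖)⁻¹ / 2 + ‖e v * x ^ (j+1)‖
        ≤ (ρ * (1-ρ)⁻¹) * ρ^(j+1) / 2 + ρ^(j+1) := by rw [← h4]; linarith
      _ = C * ρ ^ (j+1) := by rw [hC]; ring
  apply TendstoUniformlyOn.continuousOn
    (tendstoUniformlyOn_tsum hu (fun j v hv => key j v hv))
  · apply Filter.Eventually.frequently
    filter_upwards with t
    apply continuousOn_finset_sum
    intro j _
    apply ContinuousOn.clog ((continuous_const.sub ((he.mul continuous_const))).continuousOn)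
    intro v hv
    have hblt : ‖e v * x ^ (j+1)‖ < 1 :=
      lt_of_le_of_lt ((hbound v hv j).trans (hρpow j)) hρ
    have := Complex.mem_slitPlane_of_norm_lt_one (z := -(e v * x ^ (j+1))) (by simpa using hblt)
    rwa [show (1 : ℂ) + -(e v * x ^ (j+1)) = 1 - e v * x ^ (j+1) by ring] at this

lemma jacobi_aux {x : ℂ} (hx : ‖x‖ < 1) (E : ℂ) :
    deriv (fun v : ℂ => 2 * E * Complex.sin ((Real.pi:ℂ)*v) *
      ∏' j : ℕ, ((1 - x^(j+1)) * (1 - Complex.exp (2*(Real.pi:ℂ)*I*v) * x^(j+1)) *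
        (1 - Complex.exp (-(2*(Real.pi:ℂ)*I*v)) * x^(j+1)))) 0
    = 2 * E * (Real.pi:ℂ) * ((∏' j:ℕ, (1 - x^(j+1))) * (∏' j:ℕ, (1 - x^(j+1))) *
        (∏' j:ℕ, (1 - x^(j+1)))) := by
  set F : ℂ → ℂ := fun v => ∏' j : ℕ, ((1 - x^(j+1)) *
    (1 - Complex.exp (2*(Real.pi:ℂ)*I*v) * x^(j+1)) *
    (1 - Complex.exp (-(2*(Real.pi:ℂ)*I*v)) * x^(j+1))) with hFdef
  have lx : ∀ j:ℕ, ‖x ^ (j+1)‖ < 1 := fun j => norm_pow_lt_one' hx (Nat.succ_ne_zero j)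
  have sx : Summable fun j : ℕ => ‖x ^ (j+1)‖ :=
    summable_norm_pow' hx 1 1 one_pos (fun n => by ring)
  have mA : Multipliable fun j : ℕ => 1 - x^(j+1) := multipliable_one_sub' lx sx
  -- pick δ
  obtain ⟨δ, hδ, hρ⟩ : ∃ δ > 0, Real.exp (2*Real.pi*δ) * ‖x‖ < 1 := by
    have h1 : Continuous fun d : ℝ => Real.exp (2*Real.pi*d) * ‖x‖ := by continuity
    have hcont : Tendsto (fun d : ℝ => Real.exp (2*Real.pi*d) * ‖x‖) (nhds 0) (nhds ‖x‖) := by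
      have := h1.tendsto 0
      simpa using this
    have hev := hcont.eventually_lt_const hx
    obtain ⟨ε, hε, hball⟩ := Metric.eventually_nhds_iff.mp hev
    refine ⟨ε/2, by positivity, hball ?_⟩
    rw [Real.dist_eq, sub_zero, abs_of_pos (by positivity)]
    linarith
  have hρ0 : (0:ℝ) ≤ Real.exp (2*Real.pi*δ) * ‖x‖ := by positivity
  -- bounds for exp factors on ball
  have hbd : ∀ (c : ℝ), |c| ≤ 2*Real.pi → ∀ v ∈ Metric.ball (0:ℂ) δ,
      ‖Complex.exp ((c:ℂ) * I * v)‖ ≤ Real.exp (2*Real.pi*δ) := by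
    intro c hc v hv
    rw [Complex.norm_exp, Real.exp_le_exp]
    have hre : ((c:ℂ) * I * v).re = -(c * v.im) := by
      simp [Complex.mul_re, Complex.mul_im]
    rw [hre]
    have h1 : |v.im| ≤ ‖v‖ := Complex.abs_im_le_norm v
    have h2 : ‖v‖ < δ := by simpa [Complex.dist_eq] using Metric.mem_ball.mp hv
    have hπ : (0:ℝ) < 2*Real.pi := by positivity
    calc -(c * v.im) ≤ |c * v.im| := neg_le_abs _
      _ = |c| * |v.im| := abs_mul _ _
      _ ≤ (2*Real.pi) * δ := by
          apply mul_le_mul hc (h1.trans h2.le) (abs_nonneg _) hπ.le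
      _ = 2*Real.pi*δ := by ring
  have hbd1 : ∀ v ∈ Metric.ball (0:ℂ) δ,
      ‖Complex.exp (2*(Real.pi:ℂ)*I*v)‖ ≤ Real.exp (2*Real.pi*δ) := by
    intro v hv
    have := hbd (2*Real.pi) (by rw [abs_of_pos (by positivity)] ) v hv
    simpa [Complex.ofReal_mul] using this
  have hbd2 : ∀ v ∈ Metric.ball (0:ℂ) δ,
      ‖Complex.exp (-(2*(Real.pi:ℂ)*I*v))‖ ≤ Real.exp (2*Real.pi*δ) := by
    intro v hv
    have := hbd (-(2*Real.pi)) (by rw [abs_neg, abs_of_pos (by positivity)]) v hv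
    have he : ((-(2*Real.pi) : ℝ) : ℂ) * I * v = -(2*(Real.pi:ℂ)*I*v) := by
      push_cast; ring
    rwa [he] at this
  -- norms of products on ball
  have hnorm : ∀ (w : ℂ), ‖w‖ ≤ Real.exp (2*Real.pi*δ) → ∀ j : ℕ, ‖w * x^(j+1)‖ < 1 := by
    intro w hw j
    rw [norm_mul, norm_pow]
    calc ‖w‖ * ‖x‖^(j+1) ≤ Real.exp (2*Real.pi*δ) * ‖x‖^(j+1) := by
          apply mul_le_mul_of_nonneg_right hw (by positivity)
      _ ≤ Real.exp (2*Real.pi*δ) * ‖x‖ := by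
          apply mul_le_mul_of_nonneg_left _ (Real.exp_nonneg _)
          exact pow_le_of_le_one (norm_nonneg _) hx.le (Nat.succ_ne_zero j)
      _ < 1 := hρ
  -- F on the ball as products of exponentials
  set S1 : ℂ → ℂ := fun v => ∑' j : ℕ, Complex.log (1 - Complex.exp (2*(Real.pi:ℂ)*I*v) * x^(j+1))
    with hS1def
  set S2 : ℂ → ℂ := fun v => ∑' j : ℕ, Complex.log (1 - Complex.exp (-(2*(Real.pi:ℂ)*I*v)) * x^(j+1))
    with hS2def
  have hFeq : ∀ v ∈ Metric.ball (0:ℂ) δ,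
      F v = (∏' j:ℕ, (1 - x^(j+1))) * Complex.exp (S1 v) * Complex.exp (S2 v) := by
    intro v hv
    have h1 : ∀ j:ℕ, ‖Complex.exp (2*(Real.pi:ℂ)*I*v) * x^(j+1)‖ < 1 :=
      hnorm _ (hbd1 v hv)
    have h2 : ∀ j:ℕ, ‖Complex.exp (-(2*(Real.pi:ℂ)*I*v)) * x^(j+1)‖ < 1 :=
      hnorm _ (hbd2 v hv)
    have s1 : Summable fun j : ℕ => ‖Complex.exp (2*(Real.pi:ℂ)*I*v) * x^(j+1)‖ :=
      summable_norm_pow_mul' hx 1 1 one_pos (fun n => by ring)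
    have s2 : Summable fun j : ℕ => ‖Complex.exp (-(2*(Real.pi:ℂ)*I*v)) * x^(j+1)‖ :=
      summable_norm_pow_mul' hx 1 1 one_pos (fun n => by ring)
    rw [hFdef]
    simp only
    rw [tprod_triple' mA (multipliable_one_sub' h1 s1) (multipliable_one_sub' h2 s2),
      tprod_one_sub_eq_cexp' h1 s1, tprod_one_sub_eq_cexp' h2 s2]
  -- continuity of F at 0
  have hS1c : ContinuousAt S1 0 := by
    refine (contOn_S' hδ hρ _ (by continuity) hbd1).continuousAt
      (Metric.isOpen_ball.mem_nhds (Metric.mem_ball_self hδ))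
  have hS2c : ContinuousAt S2 0 := by
    refine (contOn_S' hδ hρ _ (by continuity) hbd2).continuousAt
      (Metric.isOpen_ball.mem_nhds (Metric.mem_ball_self hδ))
  have hFc : ContinuousAt F 0 := by
    have hG : ContinuousAt (fun v => (∏' j:ℕ, (1 - x^(j+1))) * Complex.exp (S1 v) *
        Complex.exp (S2 v)) 0 := by
      exact (continuousAt_const.mul hS1c.cexp).mul hS2c.cexp
    apply hG.congr
    filter_upwards [Metric.ball_mem_nhds (0:ℂ) hδ] with v hv
    exact (hFeq v hv).symm
  -- tendsto of sin(πv)/v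
  have hsin : Tendsto (fun v : ℂ => Complex.sin ((Real.pi:ℂ)*v) / v) (nhdsWithin (0:ℂ) {0}ᶜ)
      (nhds ((Real.pi:ℂ))) := by
    have hd : HasDerivAt (fun v : ℂ => Complex.sin ((Real.pi:ℂ)*v)) ((Real.pi:ℂ)) 0 := by
      have := (Complex.hasDerivAt_sin ((Real.pi:ℂ)*0)).comp 0
        ((hasDerivAt_id (0:ℂ)).const_mul ((Real.pi:ℂ)))
      simp [Function.comp_def] at this
      exact this
    have := hasDerivAt_iff_tendsto_slope.mp hd
    have heq : slope (fun v : ℂ => Complex.sin ((Real.pi:ℂ)*v)) 0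
        = fun v : ℂ => Complex.sin ((Real.pi:ℂ)*v) / v := by
      funext v
      rw [slope_fun_def_field]
      simp
    rwa [heq] at this
  have hFt : Tendsto F (nhdsWithin (0:ℂ) {0}ᶜ) (nhds (F 0)) :=
    (hFc.tendsto).mono_left nhdsWithin_le_nhds
  have hT : Tendsto (fun v : ℂ => 2 * E * (Complex.sin ((Real.pi:ℂ)*v) / v * F v))
      (nhdsWithin (0:ℂ) {0}ᶜ) (nhds (2 * E * ((Real.pi:ℂ) * F 0))) :=
    (hsin.mul hFt).const_mul _
  have hd : HasDerivAt (fun v : ℂ => 2 * E * Complex.sin ((Real.pi:ℂ)*v) * F v)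
      (2 * E * ((Real.pi:ℂ) * F 0)) 0 := by
    rw [hasDerivAt_iff_tendsto_slope]
    apply hT.congr'
    filter_upwards [self_mem_nhdsWithin] with v hv
    have hv0 : v ≠ 0 := hv
    rw [slope_fun_def_field]
    have h0 : Complex.sin ((Real.pi:ℂ)*0) = 0 := by simp
    field_simp
    simp
    ring
  have hF0 : F 0 = (∏' j:ℕ, (1 - x^(j+1))) * (∏' j:ℕ, (1 - x^(j+1))) *
      (∏' j:ℕ, (1 - x^(j+1))) := by
    rw [hFdef]
    simp only [mul_zero, Complex.exp_zero, neg_zero, one_mul]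
    exact tprod_triple' mA mA mA
  rw [hd.deriv, hF0]
  ring

end JacobiAux


/-- `q = e^{2πiτ}`. -/
noncomputable def qq (τ : ℂ) : ℂ := Complex.exp (2 * (Real.pi : ℂ) * I * τ)

/-- `q^{1/2} = e^{πiτ}`. -/
noncomputable def qh (τ : ℂ) : ℂ := Complex.exp ((Real.pi : ℂ) * I * τ)

/-- The Jacobi theta function
`θ(v,τ) = 2 q^{1/8} sin(πv) ∏_{j≥1} (1-q^j)(1-e^{2πiv}q^j)(1-e^{-2πiv}q^j)`. -/
noncomputable def jTheta (v τ : ℂ) : ℂ :=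
  2 * Complex.exp ((Real.pi : ℂ) * I * τ / 4) * Complex.sin ((Real.pi : ℂ) * v) *
    ∏' j : ℕ, ((1 - qq τ ^ (j + 1)) *
      (1 - Complex.exp (2 * (Real.pi : ℂ) * I * v) * qq τ ^ (j + 1)) *
      (1 - Complex.exp (-(2 * (Real.pi : ℂ) * I * v)) * qq τ ^ (j + 1)))

/-- `θ₁(v,τ) = 2 q^{1/8} cos(πv) ∏_{j≥1}(1-q^j)(1+e^{2πiv}q^j)(1+e^{-2πiv}q^j)`. -/
noncomputable def jTheta1 (v τ : ℂ) : ℂ :=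
  2 * Complex.exp ((Real.pi : ℂ) * I * τ / 4) * Complex.cos ((Real.pi : ℂ) * v) *
    ∏' j : ℕ, ((1 - qq τ ^ (j + 1)) *
      (1 + Complex.exp (2 * (Real.pi : ℂ) * I * v) * qq τ ^ (j + 1)) *
      (1 + Complex.exp (-(2 * (Real.pi : ℂ) * I * v)) * qq τ ^ (j + 1)))

/-- `θ₂(v,τ) = ∏_{j≥1}(1-q^j)(1-e^{2πiv}q^{j-1/2})(1-e^{-2πiv}q^{j-1/2})`. -/
noncomputable def jTheta2 (v τ : ℂ) : ℂ :=
  ∏' j : ℕ, ((1 - qh τ ^ (2 * (j + 1))) *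
    (1 - Complex.exp (2 * (Real.pi : ℂ) * I * v) * qh τ ^ (2 * j + 1)) *
    (1 - Complex.exp (-(2 * (Real.pi : ℂ) * I * v)) * qh τ ^ (2 * j + 1)))

/-- `θ₃(v,τ) = ∏_{j≥1}(1-q^j)(1+e^{2πiv}q^{j-1/2})(1+e^{-2πiv}q^{j-1/2})`. -/
noncomputable def jTheta3 (v τ : ℂ) : ℂ :=
  ∏' j : ℕ, ((1 - qh τ ^ (2 * (j + 1))) *
    (1 + Complex.exp (2 * (Real.pi : ℂ) * I * v) * qh τ ^ (2 * j + 1)) *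
    (1 + Complex.exp (-(2 * (Real.pi : ℂ) * I * v)) * qh τ ^ (2 * j + 1)))

/-- θ₁(0,τ). -/
noncomputable def theta1Null (τ : ℂ) : ℂ := jTheta1 0 τ
/-- θ₂(0,τ). -/
noncomputable def theta2Null (τ : ℂ) : ℂ := jTheta2 0 τ
/-- θ₃(0,τ). -/
noncomputable def theta3Null (τ : ℂ) : ℂ := jTheta3 0 τ

/-- δ₁(τ) = (1/8)(θ₂⁴ + θ₃⁴). -/
noncomputable def delta1 (τ : ℂ) : ℂ := (1 / 8) * (theta2Null τ ^ 4 + theta3Null τ ^ 4)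
/-- ε₁(τ) = (1/16)θ₂⁴θ₃⁴. -/
noncomputable def eps1 (τ : ℂ) : ℂ := (1 / 16) * (theta2Null τ ^ 4 * theta3Null τ ^ 4)
/-- δ₂(τ) = -(1/8)(θ₁⁴ + θ₃⁴). -/
noncomputable def delta2 (τ : ℂ) : ℂ := -(1 / 8) * (theta1Null τ ^ 4 + theta3Null τ ^ 4)
/-- ε₂(τ) = (1/16)θ₁⁴θ₃⁴. -/
noncomputable def eps2 (τ : ℂ) : ℂ := (1 / 16) * (theta1Null τ ^ 4 * theta3Null τ ^ 4)

/-- The Jacobi identity θ'(0,τ) = π θ₁(0,τ) θ₂(0,τ) θ₃(0,τ). -/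
theorem jacobi_identity (τ : ℂ) (hτ : 0 < τ.im) :
    deriv (fun v => jTheta v τ) 0 =
      (Real.pi : ℂ) * theta1Null τ * theta2Null τ * theta3Null τ := by
  have hπ := Real.pi_pos
  have hx : ‖qq τ‖ < 1 := by
    rw [qq, Complex.norm_exp, Real.exp_lt_one_iff]
    have : (2 * (Real.pi : ℂ) * I * τ).re = -(2 * Real.pi * τ.im) := by
      simp [Complex.mul_re, Complex.mul_im]
    rw [this]
    nlinarith
  have hh : ‖qh τ‖ < 1 := by
    rw [qh, Complex.norm_exp, Real.exp_lt_one_iff]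
    have : ((Real.pi : ℂ) * I * τ).re = -(Real.pi * τ.im) := by
      simp [Complex.mul_re, Complex.mul_im]
    rw [this]
    nlinarith
  have hh2 : qh τ ^ 2 = qq τ := by
    rw [qh, qq, sq, ← Complex.exp_add]
    ring_nf
  have hpow : ∀ j : ℕ, qh τ ^ (2*(j+1)) = qq τ ^ (j+1) := fun j => by
    rw [pow_mul, hh2]
  have hpow2 : ∀ j : ℕ, (qh τ ^ (2*j+1))^2 = qq τ ^ (2*j+1) := fun j => by
    rw [← pow_mul, show (2*j+1)*2 = 2*(2*j+1) from by ring, pow_mul, hh2]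
  have lx : ∀ j : ℕ, ‖qq τ ^ (j+1)‖ < 1 := fun j => norm_pow_lt_one' hx (Nat.succ_ne_zero j)
  have lh : ∀ j : ℕ, ‖qh τ ^ (2*j+1)‖ < 1 := fun j => norm_pow_lt_one' hh (by omega)
  have sx : Summable fun j : ℕ => ‖qq τ ^ (j+1)‖ :=
    summable_norm_pow' hx 1 1 one_pos (fun n => by ring)
  have sh : Summable fun j : ℕ => ‖qh τ ^ (2*j+1)‖ :=
    summable_norm_pow' hh 2 1 two_pos (fun n => rfl)
  have mA : Multipliable fun j : ℕ => 1 - qq τ ^ (j+1) := multipliable_one_sub' lx sx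
  have mB : Multipliable fun j : ℕ => 1 + qq τ ^ (j+1) := by
    have := multipliable_one_sub' (a := fun j : ℕ => -(qq τ ^ (j+1))) (by simpa using lx)
      (by simpa using sx)
    simpa [sub_neg_eq_add] using this
  have mC : Multipliable fun j : ℕ => 1 - qh τ ^ (2*j+1) := multipliable_one_sub' lh sh
  have mD : Multipliable fun j : ℕ => 1 + qh τ ^ (2*j+1) := by
    have := multipliable_one_sub' (a := fun j : ℕ => -(qh τ ^ (2*j+1))) (by simpa using lh)
      (by simpa using sh)
    simpa [sub_neg_eq_add] using this
  -- values of the theta nulls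
  have hv1 : theta1Null τ = 2 * Complex.exp ((Real.pi : ℂ) * I * τ / 4) *
      ((∏' j : ℕ, (1 - qq τ ^ (j+1))) * (∏' j : ℕ, (1 + qq τ ^ (j+1))) *
        (∏' j : ℕ, (1 + qq τ ^ (j+1)))) := by
    have e1 : theta1Null τ = 2 * Complex.exp ((Real.pi : ℂ) * I * τ / 4) *
        ∏' j : ℕ, ((1 - qq τ ^ (j+1)) * (1 + qq τ ^ (j+1)) * (1 + qq τ ^ (j+1))) := by
      rw [theta1Null]
      simp [jTheta1]
    rw [e1, tprod_triple' mA mB mB]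
  have hv2 : theta2Null τ = (∏' j : ℕ, (1 - qq τ ^ (j+1))) *
      (∏' j : ℕ, (1 - qh τ ^ (2*j+1))) * (∏' j : ℕ, (1 - qh τ ^ (2*j+1))) := by
    have e2 : theta2Null τ =
        ∏' j : ℕ, ((1 - qh τ ^ (2*(j+1))) * (1 - qh τ ^ (2*j+1)) * (1 - qh τ ^ (2*j+1))) := by
      rw [theta2Null]
      simp [jTheta2]
    rw [e2]
    have e2' : ∏' j : ℕ, ((1 - qh τ ^ (2*(j+1))) * (1 - qh τ ^ (2*j+1)) * (1 - qh τ ^ (2*j+1)))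
        = ∏' j : ℕ, ((1 - qq τ ^ (j+1)) * (1 - qh τ ^ (2*j+1)) * (1 - qh τ ^ (2*j+1))) :=
      tprod_congr (fun j => by rw [hpow j])
    rw [e2', tprod_triple' mA mC mC]
  have hv3 : theta3Null τ = (∏' j : ℕ, (1 - qq τ ^ (j+1))) *
      (∏' j : ℕ, (1 + qh τ ^ (2*j+1))) * (∏' j : ℕ, (1 + qh τ ^ (2*j+1))) := by
    have e3 : theta3Null τ =
        ∏' j : ℕ, ((1 - qh τ ^ (2*(j+1))) * (1 + qh τ ^ (2*j+1)) * (1 + qh τ ^ (2*j+1))) := by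
      rw [theta3Null]
      simp [jTheta3]
    rw [e3]
    have e3' : ∏' j : ℕ, ((1 - qh τ ^ (2*(j+1))) * (1 + qh τ ^ (2*j+1)) * (1 + qh τ ^ (2*j+1)))
        = ∏' j : ℕ, ((1 - qq τ ^ (j+1)) * (1 + qh τ ^ (2*j+1)) * (1 + qh τ ^ (2*j+1))) :=
      tprod_congr (fun j => by rw [hpow j])
    rw [e3', tprod_triple' mA mD mD]
  -- the derivative
  have hL : deriv (fun v => jTheta v τ) 0 =
      2 * Complex.exp ((Real.pi : ℂ) * I * τ / 4) * (Real.pi : ℂ) *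
        ((∏' j : ℕ, (1 - qq τ ^ (j+1))) * (∏' j : ℕ, (1 - qq τ ^ (j+1))) *
          (∏' j : ℕ, (1 - qq τ ^ (j+1)))) :=
    jacobi_aux hx (Complex.exp ((Real.pi : ℂ) * I * τ / 4))
  rw [hL, hv1, hv2, hv3]
  -- Euler's identity
  have hCD : (∏' j : ℕ, (1 - qh τ ^ (2*j+1))) * (∏' j : ℕ, (1 + qh τ ^ (2*j+1)))
      = ∏' j : ℕ, (1 - qq τ ^ (2*j+1)) := by
    rw [← Multipliable.tprod_mul mC mD]
    exact tprod_congr (fun j => by rw [← hpow2 j]; ring)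
  have heul : (∏' j : ℕ, (1 + qq τ ^ (j+1))) * (∏' j : ℕ, (1 - qq τ ^ (2*j+1))) = 1 :=
    euler_prod' hx
  have key : (∏' j : ℕ, (1 + qq τ ^ (j+1))) *
      ((∏' j : ℕ, (1 - qh τ ^ (2*j+1))) * (∏' j : ℕ, (1 + qh τ ^ (2*j+1)))) = 1 := by
    rw [hCD]
    exact heul
  linear_combination (-(2 * (Real.pi : ℂ) * Complex.exp ((Real.pi : ℂ) * I * τ / 4) *
    (∏' j : ℕ, (1 - qq τ ^ (j+1)))^3) * ((∏' j : ℕ, (1 + qq τ ^ (j+1))) *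
      ((∏' j : ℕ, (1 - qh τ ^ (2*j+1))) * (∏' j : ℕ, (1 + qh τ ^ (2*j+1)))) + 1)) * key
end
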